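/- arXiv:1004.0918 — 4 statements merged into one kernel-verified Lean document; each statement's English description precedes it below -/
import Mathlib

section
/- For every non-unital k-algebra R, the path algebra ER := ker(∂⁰_x : R[x] → R) — the non-unital subalgebra of R[x] consisting of polynomials with zero constant coefficient — is contractible: there exists a non-unital k-algebra homomorphism h : ER → (ER)[y] with ∂⁰_y∘h = 0 and ∂¹_y∘h = id_{ER}; explicitly h is induced by the substitution x ↦ xy, sending p(x) = Σ_{i≥1} pᵢ xⁱ to Σ_{i≥1} (pᵢ xⁱ)·yⁱ. -/
noncomputable section

namespace NUPolyAux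

/-! Auxiliary constructions at the level of finitely supported functions. -/

variable {R : Type*} [NonUnitalRing R]

/-- Convolution product of coefficient sequences. -/
def mulF (p q : ℕ →₀ R) : ℕ →₀ R :=
  p.sum fun i a => q.sum fun j b => Finsupp.single (i + j) (a * b)

/-- Interpretation of a coefficient sequence as a polynomial over the
unitization of `R`. -/
def toPUF (p : ℕ →₀ R) : Polynomial (Unitization ℤ R) :=
  p.sum fun i a => Polynomial.monomial i (Unitization.inr a)

theorem toPUF_single (i : ℕ) (a : R) :
    toPUF (Finsupp.single i a) = Polynomial.monomial i (Unitization.inr a) := by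
  rw [toPUF, Finsupp.sum_single_index]
  simp

theorem coeff_toPUF (p : ℕ →₀ R) (n : ℕ) :
    (toPUF p).coeff n = Unitization.inr (p n) := by
  classical
  rw [toPUF, Finsupp.sum, Polynomial.finset_sum_coeff]
  simp only [Polynomial.coeff_monomial]
  rw [Finset.sum_ite_eq' p.support n fun i => Unitization.inr (p i)]
  split
  · rfl
  · next h => rw [Finsupp.notMem_support_iff.mp h, Unitization.inr_zero]

theorem toPUF_injective : Function.Injective (toPUF (R := R)) := by
  intro p q h
  ext n
  apply Unitization.inr_injective (R := ℤ)
  rw [← coeff_toPUF, ← coeff_toPUF, h]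

theorem toPUF_zero : toPUF (0 : ℕ →₀ R) = 0 := by
  refine Polynomial.ext fun n => ?_
  rw [coeff_toPUF, Finsupp.zero_apply, Unitization.inr_zero, Polynomial.coeff_zero]

theorem toPUF_add (p q : ℕ →₀ R) : toPUF (p + q) = toPUF p + toPUF q := by
  refine Polynomial.ext fun n => ?_
  rw [coeff_toPUF, Polynomial.coeff_add, coeff_toPUF, coeff_toPUF,
    Finsupp.add_apply, Unitization.inr_add]

/-- `toPUF` as an additive monoid homomorphism. -/
def toPUFHom : (ℕ →₀ R) →+ Polynomial (Unitization ℤ R) where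
  toFun := toPUF
  map_zero' := toPUF_zero
  map_add' := toPUF_add

@[simp] theorem toPUFHom_apply (p : ℕ →₀ R) : toPUFHom p = toPUF p := rfl

theorem toPUF_mulF (p q : ℕ →₀ R) : toPUF (mulF p q) = toPUF p * toPUF q := by
  classical
  have h1 : toPUF (mulF p q)
      = p.sum fun i a => q.sum fun j b =>
          Polynomial.monomial (i + j) (Unitization.inr (a * b)) := by
    rw [mulF, ← toPUFHom_apply, map_finsuppSum]
    refine Finsupp.sum_congr fun i _ => ?_
    rw [map_finsuppSum]
    exact Finsupp.sum_congr fun j _ => toPUF_single _ _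
  rw [h1, toPUF, toPUF, Finsupp.sum_mul]
  refine Finsupp.sum_congr fun i _ => ?_
  rw [Finsupp.mul_sum]
  refine Finsupp.sum_congr fun j _ => ?_
  rw [Polynomial.monomial_mul_monomial, Unitization.inr_mul]

end NUPolyAux

/-- The non-unital polynomial algebra `R[x]` over a non-unital ring `R`:
the type of finitely supported coefficient sequences (i.e. of
`AddMonoidAlgebra R ℕ`) equipped with the convolution product. -/
structure NUPoly (R : Type*) [NonUnitalRing R] where
  /-- the coefficient sequence of a non-unital polynomial -/
  toFinsupp : ℕ →₀ R

namespace NUPoly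

open NUPolyAux

variable {R : Type*} [NonUnitalRing R]

theorem toFinsupp_injective :
    Function.Injective (toFinsupp : NUPoly R → (ℕ →₀ R)) := by
  rintro ⟨p⟩ ⟨q⟩ h
  simpa using h

instance instZero : Zero (NUPoly R) := ⟨⟨0⟩⟩
instance instAdd : Add (NUPoly R) := ⟨fun p q => ⟨p.toFinsupp + q.toFinsupp⟩⟩
instance instNeg : Neg (NUPoly R) := ⟨fun p => ⟨-p.toFinsupp⟩⟩
instance instSub : Sub (NUPoly R) := ⟨fun p q => ⟨p.toFinsupp - q.toFinsupp⟩⟩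
instance instSMul {S : Type*} [SMulZeroClass S R] : SMul S (NUPoly R) :=
  ⟨fun c p => ⟨c • p.toFinsupp⟩⟩
instance instMul : Mul (NUPoly R) := ⟨fun p q => ⟨mulF p.toFinsupp q.toFinsupp⟩⟩

@[simp] theorem toFinsupp_zero : (0 : NUPoly R).toFinsupp = 0 := rfl
@[simp] theorem toFinsupp_add (p q : NUPoly R) :
    (p + q).toFinsupp = p.toFinsupp + q.toFinsupp := rfl
@[simp] theorem toFinsupp_smul {S : Type*} [SMulZeroClass S R] (c : S) (p : NUPoly R) :
    (c • p).toFinsupp = c • p.toFinsupp := rfl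
@[simp] theorem toFinsupp_mul (p q : NUPoly R) :
    (p * q).toFinsupp = mulF p.toFinsupp q.toFinsupp := rfl

instance instAddCommGroup : AddCommGroup (NUPoly R) :=
  toFinsupp_injective.addCommGroup toFinsupp rfl (fun _ _ => rfl) (fun _ => rfl)
    (fun _ _ => rfl) (fun _ _ => rfl) (fun _ _ => rfl)

/-- The interpretation of `p ∈ R[x]` as a polynomial over the unitization of `R`. -/
def toPU (p : NUPoly R) : Polynomial (Unitization ℤ R) := toPUF p.toFinsupp

theorem toPU_injective : Function.Injective (toPU (R := R)) :=
  fun _ _ h => toFinsupp_injective (toPUF_injective h)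

theorem toPU_zero : toPU (0 : NUPoly R) = 0 := toPUF_zero
theorem toPU_add (p q : NUPoly R) : toPU (p + q) = toPU p + toPU q := toPUF_add _ _
theorem toPU_mul (p q : NUPoly R) : toPU (p * q) = toPU p * toPU q := toPUF_mulF _ _

instance instNonUnitalRing : NonUnitalRing (NUPoly R) :=
  { instAddCommGroup, instMul with
    left_distrib := fun p q r => toPU_injective <| by
      rw [toPU_mul, toPU_add, toPU_add, toPU_mul, toPU_mul, mul_add]
    right_distrib := fun p q r => toPU_injective <| by
      rw [toPU_mul, toPU_add, toPU_add, toPU_mul, toPU_mul, add_mul]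
    zero_mul := fun p => toPU_injective <| by
      rw [toPU_mul, toPU_zero, zero_mul]
    mul_zero := fun p => toPU_injective <| by
      rw [toPU_mul, toPU_zero, mul_zero]
    mul_assoc := fun p q r => toPU_injective <| by
      rw [toPU_mul, toPU_mul, toPU_mul, toPU_mul, mul_assoc] }

theorem mul_def (p q : NUPoly R) :
    (p * q).toFinsupp
      = p.toFinsupp.sum fun i a => q.toFinsupp.sum fun j b =>
          Finsupp.single (i + j) (a * b) := rfl

theorem mul_apply (p q : NUPoly R) (n : ℕ) :
    (p * q).toFinsupp n = ∑ x ∈ Finset.HasAntidiagonal.antidiagonal n, p.toFinsupp x.1 * q.toFinsupp x.2 := by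
  apply Unitization.inr_injective (R := ℤ)
  have h : (Unitization.inr ((p * q).toFinsupp n) : Unitization ℤ R)
      = ∑ x ∈ Finset.HasAntidiagonal.antidiagonal n,
          (Unitization.inr (p.toFinsupp x.1) * Unitization.inr (q.toFinsupp x.2) :
            Unitization ℤ R) := by
    rw [← coeff_toPUF, ← toPU, toPU_mul, Polynomial.coeff_mul]
    exact Finset.sum_congr rfl fun x _ => by
      rw [toPU, toPU, coeff_toPUF, coeff_toPUF]
  rw [h]
  simp only [← Unitization.inr_mul]
  exact (map_sum (Unitization.inrHom ℤ ℤ R) (fun x => p.toFinsupp x.1 * q.toFinsupp x.2)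
    (Finset.HasAntidiagonal.antidiagonal n)).symm

section Module

variable {k : Type*} [Semiring k] [Module k R]

/-- `toFinsupp` as an additive monoid homomorphism. -/
def toFinsuppAddHom : NUPoly R →+ (ℕ →₀ R) where
  toFun := toFinsupp
  map_zero' := rfl
  map_add' := fun _ _ => rfl

instance instModule : Module k (NUPoly R) :=
  Function.Injective.module k toFinsuppAddHom toFinsupp_injective fun _ _ => rfl

end Module

section Scalars

variable (k : Type*) [CommRing k] [Module k R]

instance instIsScalarTower [IsScalarTower k R R] :
    IsScalarTower k (NUPoly R) (NUPoly R) := by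
  refine ⟨fun c p q => ?_⟩
  rw [smul_eq_mul, smul_eq_mul]
  apply toFinsupp_injective
  simp only [toFinsupp_mul, toFinsupp_smul]
  rw [mulF, mulF, Finsupp.sum_smul_index' (by simp), Finsupp.smul_sum]
  refine Finsupp.sum_congr fun i _ => ?_
  rw [Finsupp.smul_sum]
  refine Finsupp.sum_congr fun j _ => ?_
  rw [smul_mul_assoc, Finsupp.smul_single]

instance instSMulCommClass [SMulCommClass k R R] :
    SMulCommClass k (NUPoly R) (NUPoly R) := by
  refine ⟨fun c p q => ?_⟩
  rw [smul_eq_mul, smul_eq_mul]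
  apply toFinsupp_injective
  simp only [toFinsupp_mul, toFinsupp_smul]
  rw [mulF, mulF, Finsupp.smul_sum]
  refine Finsupp.sum_congr fun i _ => ?_
  rw [Finsupp.sum_smul_index' (by simp), Finsupp.smul_sum]
  refine Finsupp.sum_congr fun j _ => ?_
  rw [mul_smul_comm, Finsupp.smul_single]

end Scalars

/-- The non-unital polynomial `r·xⁱ`. -/
def single (i : ℕ) (a : R) : NUPoly R := ⟨Finsupp.single i a⟩

/-- Evaluation at `x = 0` (the constant coefficient), as a non-unital algebra
homomorphism `∂⁰ : R[x] → R`. -/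
def atZero (k R : Type*) [CommRing k] [NonUnitalRing R] [Module k R] :
    NUPoly R →ₙₐ[k] R where
  toFun p := p.toFinsupp 0
  map_add' p q := by
    show (p + q).toFinsupp 0 = p.toFinsupp 0 + q.toFinsupp 0
    rw [toFinsupp_add, Finsupp.add_apply]
  map_smul' c p := by
    show (c • p).toFinsupp 0 = c • p.toFinsupp 0
    rw [toFinsupp_smul, Finsupp.smul_apply]
  map_zero' := rfl
  map_mul' p q := by
    show (p * q).toFinsupp 0 = p.toFinsupp 0 * q.toFinsupp 0
    rw [mul_apply, Finset.Nat.antidiagonal_zero, Finset.sum_singleton]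

/-- Evaluation at `x = 1` (the sum of the coefficients), as a non-unital algebra
homomorphism `∂¹ : R[x] → R`. -/
def coeffSum (k R : Type*) [CommRing k] [NonUnitalRing R] [Module k R] :
    NUPoly R →ₙₐ[k] R where
  toFun p := p.toFinsupp.sum fun _ a => a
  map_add' p q := by
    show ((p + q).toFinsupp.sum fun _ a => a)
      = (p.toFinsupp.sum fun _ a => a) + q.toFinsupp.sum fun _ a => a
    rw [toFinsupp_add]
    exact Finsupp.sum_add_index' (fun _ => rfl) (fun _ _ _ => rfl)
  map_smul' c p := by
    show ((c • p).toFinsupp.sum fun _ a => a) = c • p.toFinsupp.sum fun _ a => a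
    rw [toFinsupp_smul]
    have h1 : ((c • p.toFinsupp).sum fun _ a => a) = p.toFinsupp.sum fun _ a => c • a :=
      Finsupp.sum_smul_index' (h := fun (_ : ℕ) (a : R) => a) (fun _ => rfl)
    have h2 : (c • p.toFinsupp.sum fun _ a => a) = p.toFinsupp.sum fun _ a => c • a :=
      Finsupp.smul_sum
    rw [h1, h2]
  map_zero' := by
    show ((0 : NUPoly R).toFinsupp.sum fun _ a => a) = 0
    rw [toFinsupp_zero]
    exact Finsupp.sum_zero_index
  map_mul' p q := by
    classical
    show ((p * q).toFinsupp.sum fun _ a => a)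
      = (p.toFinsupp.sum fun _ a => a) * q.toFinsupp.sum fun _ a => a
    rw [mul_def, Finsupp.sum_sum_index (fun _ => rfl) (fun _ _ _ => rfl)]
    have h1 : (p.toFinsupp.sum fun i a =>
          (q.toFinsupp.sum fun j b => Finsupp.single (i + j) (a * b)).sum fun _ c => c)
        = p.toFinsupp.sum fun i a => q.toFinsupp.sum fun j b => a * b := by
      refine Finsupp.sum_congr fun i _ => ?_
      rw [Finsupp.sum_sum_index (fun _ => rfl) (fun _ _ _ => rfl)]
      exact Finsupp.sum_congr fun j _ => Finsupp.sum_single_index rfl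
    have h2 : (p.toFinsupp.sum fun i a => q.toFinsupp.sum fun j b => a * b)
        = p.toFinsupp.sum fun i a => a * q.toFinsupp.sum fun _ b => b :=
      Finsupp.sum_congr fun i _ => (Finsupp.mul_sum _ _).symm
    rw [h1, h2, ← Finsupp.sum_mul]

@[simp] theorem atZero_apply (k : Type*) [CommRing k] [Module k R] (p : NUPoly R) :
    atZero k R p = p.toFinsupp 0 := rfl

@[simp] theorem coeffSum_apply (k : Type*) [CommRing k] [Module k R] (p : NUPoly R) :
    coeffSum k R p = p.toFinsupp.sum fun _ a => a := rfl

end NUPoly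

section Homotopy

variable (k : Type*) [CommRing k]
variable {A B : Type*} [NonUnitalRing A] [Module k A] [NonUnitalRing B] [Module k B]

/-- Two non-unital algebra homomorphisms `f₀ f₁ : A → B` are *elementary homotopic*
if there is a homomorphism `H : A → B[x]` with `∂⁰ ∘ H = f₀` and `∂¹ ∘ H = f₁`. -/
def ElemHomotopic (f₀ f₁ : A →ₙₐ[k] B) : Prop :=
  ∃ H : A →ₙₐ[k] NUPoly B,
    (NUPoly.atZero k B).comp H = f₀ ∧ (NUPoly.coeffSum k B).comp H = f₁

/-- *Homotopy* of non-unital algebra homomorphisms: the equivalence relation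
generated by elementary homotopy. -/
def NUHomotopic (f₀ f₁ : A →ₙₐ[k] B) : Prop :=
  Relation.EqvGen (ElemHomotopic k) f₀ f₁

end Homotopy

/-- The path algebra `ER := ker(∂⁰ : R[x] → R)`, the non-unital subalgebra of
`R[x]` consisting of the polynomials with zero constant coefficient. -/
noncomputable def pathAlgebra (k : Type*) [CommRing k] (R : Type*) [NonUnitalRing R]
    [Module k R] : NonUnitalSubalgebra k (NUPoly R) where
  carrier := {p | NUPoly.atZero k R p = 0}
  add_mem' := fun {p q} hp hq => by
    simp only [Set.mem_setOf_eq] at *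
    rw [map_add, hp, hq, add_zero]
  zero_mem' := by simp only [Set.mem_setOf_eq, map_zero]
  mul_mem' := fun {p q} hp hq => by
    simp only [Set.mem_setOf_eq] at *
    rw [map_mul, hp, zero_mul]
  smul_mem' := fun c p hp => by
    simp only [Set.mem_setOf_eq] at *
    rw [map_smul, hp, smul_zero]

/-! The contraction is the substitution `x ↦ x·y`, which sends `p = ∑ pᵢ xⁱ` to
`∑ (pᵢ xⁱ) yⁱ`. It is multiplicative because `(pᵢ xⁱ)(qⱼ xʲ) = pᵢ qⱼ xⁱ⁺ʲ` sits in
`y`-degree `i + j` as well. Its `y⁰`-coefficient is `p₀ = 0`, and setting `y = 1`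
gives back `∑ pᵢ xⁱ = p`. The vanishing of `p₀` is also exactly what puts every
coefficient `pᵢ xⁱ` into `ER`. -/

namespace NUPoly

variable {R : Type*} [NonUnitalRing R]

@[simp] theorem toFinsupp_single (i : ℕ) (a : R) :
    (single i a).toFinsupp = Finsupp.single i a := rfl

theorem single_zero (i : ℕ) : single i (0 : R) = 0 :=
  toFinsupp_injective (Finsupp.single_zero i)

theorem single_add (i : ℕ) (a b : R) : single i (a + b) = single i a + single i b :=
  toFinsupp_injective (Finsupp.single_add i a b)

theorem single_smul {k : Type*} [Semiring k] [Module k R] (i : ℕ) (c : k) (a : R) :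
    single i (c • a) = c • single i a :=
  toFinsupp_injective (Finsupp.smul_single c i a).symm

def singleAddHom (i : ℕ) : R →+ NUPoly R where
  toFun := single i
  map_zero' := single_zero i
  map_add' := single_add i

theorem single_mul_single (i j : ℕ) (a b : R) :
    single i a * single j b = single (i + j) (a * b) := by
  apply toFinsupp_injective
  rw [mul_def, toFinsupp_single, toFinsupp_single, Finsupp.sum_single_index (by simp),
    Finsupp.sum_single_index (by simp), toFinsupp_single]

theorem sum_single (p : NUPoly R) : ∑ n ∈ p.toFinsupp.support, single n (p.toFinsupp n) = p :=
  toFinsupp_injective <| (map_sum toFinsuppAddHom _ _).trans (Finsupp.sum_single p.toFinsupp)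

theorem single_coeff_mul (p q : NUPoly R) (n : ℕ) :
    single n ((p * q).toFinsupp n) = ∑ x ∈ Finset.HasAntidiagonal.antidiagonal n,
      single x.1 (p.toFinsupp x.1) * single x.2 (q.toFinsupp x.2) := by
  rw [mul_apply]
  refine (map_sum (singleAddHom (R := R) n) _ _).trans ?_
  refine Finset.sum_congr rfl fun x hx => ?_
  rw [single_mul_single, Finset.HasAntidiagonal.mem_antidiagonal.mp hx]
  rfl

end NUPoly

namespace pathAlgebra

open NUPoly

variable {k : Type*} [CommRing k] {R : Type*} [NonUnitalRing R] [Module k R]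

theorem single_coeff_mem (p : pathAlgebra k R) (n : ℕ) :
    single n ((p : NUPoly R).toFinsupp n) ∈ pathAlgebra k R := by
  change (Finsupp.single n _) 0 = 0
  rcases n with _ | n
  · exact Finsupp.single_eq_same.trans p.2
  · exact Finsupp.single_eq_of_ne (Nat.succ_ne_zero n).symm

def contractionCoeff (p : pathAlgebra k R) (n : ℕ) : pathAlgebra k R :=
  ⟨single n ((p : NUPoly R).toFinsupp n), single_coeff_mem p n⟩

theorem contractionCoeff_eq_zero {p : pathAlgebra k R} {n : ℕ}
    (h : (p : NUPoly R).toFinsupp n = 0) : contractionCoeff p n = 0 :=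
  Subtype.ext <| by simp [contractionCoeff, h, single_zero]

theorem mem_support_of_contractionCoeff_ne_zero {p : pathAlgebra k R} {n : ℕ}
    (h : contractionCoeff p n ≠ 0) : n ∈ (p : NUPoly R).toFinsupp.support :=
  Finsupp.mem_support_iff.mpr fun hn => h (contractionCoeff_eq_zero hn)

variable (k R) in
/-- The substitution `x ↦ x·y` on `ER`. -/
def contraction : pathAlgebra k R →ₙₐ[k] NUPoly (pathAlgebra k R) where
  toFun p := ⟨Finsupp.onFinset (p : NUPoly R).toFinsupp.support (contractionCoeff p)
    fun _ => mem_support_of_contractionCoeff_ne_zero⟩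
  map_add' p q := toFinsupp_injective <| Finsupp.ext fun n => Subtype.ext <| single_add n _ _
  map_smul' c p := toFinsupp_injective <| Finsupp.ext fun n => Subtype.ext <| single_smul n c _
  map_zero' := toFinsupp_injective <| Finsupp.ext fun n => contractionCoeff_eq_zero rfl
  map_mul' p q := toFinsupp_injective <| Finsupp.ext fun n => Subtype.ext <| by
    rw [mul_apply, AddSubmonoidClass.coe_finset_sum]
    exact single_coeff_mul (p : NUPoly R) q n

theorem atZero_comp_contraction : (atZero k (pathAlgebra k R)).comp (contraction k R) = 0 :=
  NonUnitalAlgHom.ext fun p => contractionCoeff_eq_zero p.2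

theorem coeffSum_comp_contraction :
    (coeffSum k (pathAlgebra k R)).comp (contraction k R) = NonUnitalAlgHom.id k _ := by
  refine NonUnitalAlgHom.ext fun p => Subtype.ext ?_
  change ((Finsupp.onFinset _ (contractionCoeff p)
    fun _ => mem_support_of_contractionCoeff_ne_zero).sum fun _ a => a : pathAlgebra k R) =
      (p : NUPoly R)
  rw [Finsupp.onFinset_sum _ fun _ => rfl, AddSubmonoidClass.coe_finset_sum]
  exact sum_single (p : NUPoly R)

end pathAlgebra

theorem pathAlgebra_contractible_general
    (k : Type*) [CommRing k] (R : Type*)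
    [NonUnitalRing R] [Module k R] :
    ∃ h : pathAlgebra k R →ₙₐ[k] NUPoly (pathAlgebra k R),
      (∀ (p : pathAlgebra k R) (i : ℕ),
        (((h p).toFinsupp i : pathAlgebra k R) : NUPoly R)
          = NUPoly.single i ((p : NUPoly R).toFinsupp i)) ∧
      (NUPoly.atZero k (pathAlgebra k R)).comp h = 0 ∧
      (NUPoly.coeffSum k (pathAlgebra k R)).comp h
        = NonUnitalAlgHom.id k (pathAlgebra k R) :=
  ⟨pathAlgebra.contraction k R, fun _ _ => rfl, pathAlgebra.atZero_comp_contraction,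
    pathAlgebra.coeffSum_comp_contraction⟩

/-- For every non-unital `k`-algebra `R`, the path algebra
`ER = ker(∂⁰ : R[x] → R)` is contractible: there is a non-unital `k`-algebra
homomorphism `h : ER → (ER)[y]` with `∂⁰_y ∘ h = 0` and `∂¹_y ∘ h = id`;
explicitly `h` is induced by the substitution `x ↦ x·y`, i.e. the `i`-th
coefficient of `h p` is the polynomial `pᵢ·xⁱ`. -/
theorem pathAlgebra_contractible
    (k : Type*) [CommRing k] (R : Type*)
    [NonUnitalRing R] [Module k R] [SMulCommClass k R R] [IsScalarTower k R R] :
    ∃ h : pathAlgebra k R →ₙₐ[k] NUPoly (pathAlgebra k R),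
      (∀ (p : pathAlgebra k R) (i : ℕ),
        (((h p).toFinsupp i : pathAlgebra k R) : NUPoly R)
          = NUPoly.single i ((p : NUPoly R).toFinsupp i)) ∧
      (NUPoly.atZero k (pathAlgebra k R)).comp h = 0 ∧
      (NUPoly.coeffSum k (pathAlgebra k R)).comp h
        = NonUnitalAlgHom.id k (pathAlgebra k R) :=
  pathAlgebra_contractible_general k R
end
end

section
/- Let R be a non-unital k-algebra and p ∈ R[x]. Then ∂⁰_x(p) = 0 and ∂¹_x(p) = 0 if and only if there exists q ∈ R[x] with p = q·x² − q·x, where multiplication by the central variable x is the coefficient-shift operation on R[x]. In other words, the loop algebra ΩR = ker(∂⁰_x) ∩ ker(∂¹_x) ⊆ R[x], i.e. the kernel of ∂¹_x restricted to the path algebra ER = ker(∂⁰_x), equals (x² − x)·R[x]. -/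
noncomputable section

namespace NUPoly

/-- Multiplication by the central variable `x`, i.e. the coefficient-shift
operation `Σ pᵢ xⁱ ↦ Σ pᵢ xⁱ⁺¹` on `R[x]`. -/
noncomputable def shiftX {R : Type*} [NonUnitalRing R] (p : NUPoly R) : NUPoly R :=
  ⟨Finsupp.mapDomain (· + 1) p.toFinsupp⟩

end NUPoly

/-! Since the coefficients of `p` sum to zero, the negated partial sums
`gₙ = -(p₀ + ⋯ + pₙ)` vanish for large `n`, and `p = x·g - g`. Then `g₀ = -p₀ = 0`,
so `g = x·q` and `p = x²·q - x·q`. -/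

namespace NUPoly

variable {R : Type*} [NonUnitalRing R]

theorem toFinsupp_sub (p q : NUPoly R) : (p - q).toFinsupp = p.toFinsupp - q.toFinsupp := rfl

theorem ext {p q : NUPoly R} (h : ∀ n, p.toFinsupp n = q.toFinsupp n) : p = q :=
  toFinsupp_injective (Finsupp.ext h)

theorem shiftX_apply_zero (q : NUPoly R) : (shiftX q).toFinsupp 0 = 0 :=
  Finsupp.mapDomain_of_notMem_range _ _ fun ⟨m, hm⟩ => Nat.succ_ne_zero m hm

theorem shiftX_apply_succ (q : NUPoly R) (n : ℕ) : (shiftX q).toFinsupp (n + 1) = q.toFinsupp n :=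
  Finsupp.mapDomain_apply (add_left_injective 1) _ n

section Evaluations

variable (k : Type*) [CommRing k] [Module k R]

theorem atZero_shiftX (q : NUPoly R) : atZero k R (shiftX q) = 0 :=
  shiftX_apply_zero q

theorem coeffSum_shiftX (q : NUPoly R) : coeffSum k R (shiftX q) = coeffSum k R q :=
  Finsupp.sum_mapDomain_index (h := fun _ a => a) (fun _ => rfl) (fun _ _ _ => rfl)

theorem exists_eq_shiftX_of_atZero_eq_zero {p : NUPoly R} (hp : atZero k R p = 0) :
    ∃ q, p = shiftX q := by
  refine ⟨⟨p.toFinsupp.comapDomain (· + 1) (add_left_injective 1).injOn⟩, ext ?_⟩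
  rintro (_ | n)
  · rw [shiftX_apply_zero]
    exact hp
  · rw [shiftX_apply_succ, Finsupp.comapDomain_apply]

theorem exists_eq_shiftX_sub_self_of_coeffSum_eq_zero {p : NUPoly R}
    (hp : coeffSum k R p = 0) : ∃ g, p = shiftX g - g := by
  classical
  set partialSum : ℕ → R := fun n => ∑ i ∈ Finset.range (n + 1), p.toFinsupp i
  obtain ⟨N, hN⟩ := Finset.exists_nat_subset_range p.toFinsupp.support
  have neg_partialSum_support : ∀ n, -partialSum n ≠ 0 → n ∈ Finset.range N := by
    intro n hn
    by_contra hnN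
    refine hn ?_
    have hsupp : p.toFinsupp.support ⊆ Finset.range (n + 1) :=
      hN.trans (Finset.range_subset_range.2 (by rw [Finset.mem_range, not_lt] at hnN; omega))
    rw [neg_eq_zero, ← hp, coeffSum_apply, Finsupp.sum_of_support_subset _ hsupp _ fun _ _ => rfl]
  refine ⟨⟨Finsupp.onFinset _ _ neg_partialSum_support⟩, ext ?_⟩
  rintro (_ | n)
  · simp [toFinsupp_sub, shiftX_apply_zero, partialSum]
  · simp only [toFinsupp_sub, Finsupp.sub_apply, shiftX_apply_succ, Finsupp.onFinset_apply,
      partialSum, Finset.sum_range_succ _ (n + 1)]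
    abel

end Evaluations

end NUPoly

theorem loopAlgebra_eq_xsq_sub_x_mul_general
    (k : Type*) [CommRing k] (R : Type*)
    [NonUnitalRing R] [Module k R]
    (p : NUPoly R) :
    (NUPoly.atZero k R p = 0 ∧ NUPoly.coeffSum k R p = 0) ↔
      ∃ q : NUPoly R, p = NUPoly.shiftX (NUPoly.shiftX q) - NUPoly.shiftX q := by
  open NUPoly in
  constructor
  · rintro ⟨h0, h1⟩
    obtain ⟨g, rfl⟩ := exists_eq_shiftX_sub_self_of_coeffSum_eq_zero k h1
    have hg : atZero k R g = 0 := by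
      rwa [map_sub, atZero_shiftX, zero_sub, neg_eq_zero] at h0
    obtain ⟨q, rfl⟩ := exists_eq_shiftX_of_atZero_eq_zero k hg
    exact ⟨q, rfl⟩
  · rintro ⟨q, rfl⟩
    simp only [map_sub, atZero_shiftX, coeffSum_shiftX, sub_self, and_self]

/-- Let `R` be a non-unital `k`-algebra and `p ∈ R[x]`.
Then `∂⁰(p) = 0` and `∂¹(p) = 0` if and only if there exists `q ∈ R[x]` with
`p = q·x² - q·x`, where multiplication by the central variable `x` is the
coefficient-shift operation on `R[x]`.  In other words, the loop algebra
`ΩR = ker ∂⁰ ∩ ker ∂¹` equals `(x² - x)·R[x]`. -/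
theorem loopAlgebra_eq_xsq_sub_x_mul
    (k : Type*) [CommRing k] (R : Type*)
    [NonUnitalRing R] [Module k R] [SMulCommClass k R R] [IsScalarTower k R R]
    (p : NUPoly R) :
    (NUPoly.atZero k R p = 0 ∧ NUPoly.coeffSum k R p = 0) ↔
      ∃ q : NUPoly R, p = NUPoly.shiftX (NUPoly.shiftX q) - NUPoly.shiftX q :=
  loopAlgebra_eq_xsq_sub_x_mul_general k R p
end
end

section
/- Let α : B → C be a surjective non-unital k-algebra homomorphism and s : C → B a k-linear map with α∘s = id_C. Then (Unitization.map α) ∘ γ_s = η_C as k-algebra homomorphisms TensorAlgebra k C → Unitization k C. Consequently, for every a ∈ J(C) = ker η_C there is a unique element ξ_s(a) ∈ ker α with γ_s(a) = inr(ξ_s(a)), and the resulting map ξ_s : J(C) → ker α is a non-unital k-algebra homomorphism — the classifying map of the k-split extension ker α → B → C, making the diagram comparing it with the universal extension J(C) → T(C) → C commute. -/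
noncomputable section

section TensorUnitization

variable (k : Type*) [CommRing k]

/-- `γ_u` : for a `k`-linear map `u : C → B` into a non-unital `k`-algebra `B`,
the unique `k`-algebra homomorphism `TensorAlgebra k C → Unitization k B` with
`γ_u (ι c) = inr (u c)`. -/
noncomputable def gammaMap {B C : Type*}
    [NonUnitalRing B] [Module k B] [SMulCommClass k B B] [IsScalarTower k B B]
    [NonUnitalRing C] [Module k C]
    (u : C →ₗ[k] B) : TensorAlgebra k C →ₐ[k] Unitization k B :=
  TensorAlgebra.lift k ((Unitization.inrHom k k B).comp u)

/-- `η_C := γ_{id C}` : the canonical `k`-algebra homomorphism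
`TensorAlgebra k C → Unitization k C`. -/
noncomputable def etaHom (C : Type*)
    [NonUnitalRing C] [Module k C] [SMulCommClass k C C] [IsScalarTower k C C] :
    TensorAlgebra k C →ₐ[k] Unitization k C :=
  gammaMap k (LinearMap.id (R := k) (M := C))

/-- `J(C) := ker η_C`, the ideal of the universal extension
`J(C) → T(C) → C`, as a non-unital subalgebra of the tensor algebra. -/
noncomputable def jIdeal (C : Type*)
    [NonUnitalRing C] [Module k C] [SMulCommClass k C C] [IsScalarTower k C C] :
    NonUnitalSubalgebra k (TensorAlgebra k C) where
  carrier := {a | etaHom k C a = 0}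
  add_mem' := fun {p q} hp hq => by
    simp only [Set.mem_setOf_eq] at *
    rw [map_add, hp, hq, add_zero]
  zero_mem' := by simp only [Set.mem_setOf_eq, map_zero]
  mul_mem' := fun {p q} hp hq => by
    simp only [Set.mem_setOf_eq] at *
    rw [map_mul, hp, zero_mul]
  smul_mem' := fun c p hp => by
    simp only [Set.mem_setOf_eq] at *
    rw [map_smul, hp, smul_zero]

/-- The kernel of a non-unital algebra homomorphism, as a non-unital
subalgebra. -/
noncomputable def nuaKer {B C : Type*}
    [NonUnitalRing B] [Module k B] [NonUnitalRing C] [Module k C]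
    (α : B →ₙₐ[k] C) : NonUnitalSubalgebra k B where
  carrier := {b | α b = 0}
  add_mem' := fun {p q} hp hq => by
    simp only [Set.mem_setOf_eq] at *
    rw [map_add, hp, hq, add_zero]
  zero_mem' := by simp only [Set.mem_setOf_eq, map_zero]
  mul_mem' := fun {p q} hp hq => by
    simp only [Set.mem_setOf_eq] at *
    rw [map_mul, hp, zero_mul]
  smul_mem' := fun c p hp => by
    simp only [Set.mem_setOf_eq] at *
    rw [map_smul, hp, smul_zero]

/-- The functorial extension of a non-unital algebra homomorphism `φ : B → C`
to unitizations, `Unitization k B → Unitization k C` (with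
`inr b ↦ inr (φ b)`). -/
noncomputable def unitizationMap {B C : Type*}
    [NonUnitalRing B] [Module k B] [SMulCommClass k B B] [IsScalarTower k B B]
    [NonUnitalRing C] [Module k C] [SMulCommClass k C C] [IsScalarTower k C C]
    (φ : B →ₙₐ[k] C) : Unitization k B →ₐ[k] Unitization k C :=
  Unitization.lift ((Unitization.inrNonUnitalAlgHom k C).comp φ)

end TensorUnitization

/-! By the universal property of the tensor algebra,
`Unitization.map α ∘ γ_s = γ_{α ∘ s} = γ_id = η_C`. Hence `γ_s` maps `J(C) = ker η_C` into the
kernel of `Unitization.map α`, which is `inr (ker α)`; since `inr` is injective and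
multiplicative, reading off the `inr`-component of `γ_s` on `J(C)` gives a non-unital algebra
homomorphism `J(C) → ker α`. -/

theorem Unitization.inr_snd_of_fst_eq_zero {R A : Type*} [AddZeroClass R] [AddZeroClass A]
    {x : Unitization R A} (hx : x.fst = 0) : Unitization.inr x.snd = x := by
  ext <;> simp [hx]

section ClassifyingMap

variable {k : Type*} [CommRing k] {B C : Type*}
  [NonUnitalRing B] [Module k B] [SMulCommClass k B B] [IsScalarTower k B B]
  [NonUnitalRing C] [Module k C] [SMulCommClass k C C] [IsScalarTower k C C]

theorem unitizationMap_apply (φ : B →ₙₐ[k] C) (x : Unitization k B) :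
    unitizationMap k φ x = Unitization.inl x.fst + Unitization.inr (φ x.snd) := by
  simp [unitizationMap, Unitization.algebraMap_eq_inl]

theorem unitizationMap_eq_zero_iff {φ : B →ₙₐ[k] C} {x : Unitization k B} :
    unitizationMap k φ x = 0 ↔ x.fst = 0 ∧ φ x.snd = 0 := by
  simp [unitizationMap_apply, Unitization.ext_iff]

theorem unitizationMap_comp_gammaMap {D : Type*} [NonUnitalRing D] [Module k D]
    (φ : B →ₙₐ[k] C) (u : D →ₗ[k] B) :
    (unitizationMap k φ).comp (gammaMap k u) = gammaMap k ((φ : B →ₗ[k] C).comp u) := by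
  refine TensorAlgebra.hom_ext (LinearMap.ext fun d => ?_)
  simp [gammaMap, unitizationMap_apply]

theorem unitizationMap_comp_gammaMap_of_rightInverse {α : B →ₙₐ[k] C} {s : C →ₗ[k] B}
    (hs : Function.RightInverse s α) :
    (unitizationMap k α).comp (gammaMap k s) = etaHom k C := by
  rw [unitizationMap_comp_gammaMap, etaHom]
  congr
  exact LinearMap.ext hs

variable {α : B →ₙₐ[k] C} {s : C →ₗ[k] B}

theorem gammaMap_of_mem_jIdeal (hs : Function.RightInverse s α) {a : TensorAlgebra k C}
    (ha : a ∈ jIdeal k C) :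
    α (gammaMap k s a).snd = 0 ∧ Unitization.inr (gammaMap k s a).snd = gammaMap k s a := by
  have hker : unitizationMap k α (gammaMap k s a) = 0 := by
    rw [← AlgHom.comp_apply, unitizationMap_comp_gammaMap_of_rightInverse hs]
    exact ha
  obtain ⟨hfst, hsnd⟩ := unitizationMap_eq_zero_iff.mp hker
  exact ⟨hsnd, Unitization.inr_snd_of_fst_eq_zero hfst⟩

def classifyingMap (hs : Function.RightInverse s α) : jIdeal k C →ₙₐ[k] nuaKer k α where
  toFun a := ⟨(gammaMap k s a).snd, (gammaMap_of_mem_jIdeal hs a.2).1⟩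
  map_smul' c a := Subtype.ext <| by simp
  map_zero' := Subtype.ext <| by simp
  map_add' a b := Subtype.ext <| by simp
  map_mul' a b := Subtype.ext <| Unitization.inr_injective (R := k) <| by
    change Unitization.inr (gammaMap k s ↑(a * b)).snd
      = Unitization.inr ((gammaMap k s a).snd * (gammaMap k s b).snd)
    rw [(gammaMap_of_mem_jIdeal hs (a * b).2).2, Unitization.inr_mul,
      (gammaMap_of_mem_jIdeal hs a.2).2, (gammaMap_of_mem_jIdeal hs b.2).2,
      NonUnitalSubalgebra.coe_mul, map_mul]

theorem inr_classifyingMap (hs : Function.RightInverse s α) (a : jIdeal k C) :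
    Unitization.inr (classifyingMap hs a : B) = gammaMap k s (a : TensorAlgebra k C) :=
  (gammaMap_of_mem_jIdeal hs a.2).2

end ClassifyingMap

theorem classifying_map_of_split_extension_general
    (k : Type*) [CommRing k] {B C : Type*}
    [NonUnitalRing B] [Module k B] [SMulCommClass k B B] [IsScalarTower k B B]
    [NonUnitalRing C] [Module k C] [SMulCommClass k C C] [IsScalarTower k C C]
    (α : B →ₙₐ[k] C)
    (s : C →ₗ[k] B) (hs : ∀ c : C, α (s c) = c) :
    (unitizationMap k α).comp (gammaMap k s) = etaHom k C ∧
    (∀ a : TensorAlgebra k C, etaHom k C a = 0 →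
      ∃! x : B, α x = 0 ∧ gammaMap k s a = Unitization.inr x) ∧
    ∃ ξ : jIdeal k C →ₙₐ[k] nuaKer k α,
      ∀ a : jIdeal k C,
        (Unitization.inr ((ξ a : B)) : Unitization k B)
          = gammaMap k s (a : TensorAlgebra k C) := by
  refine ⟨unitizationMap_comp_gammaMap_of_rightInverse hs, fun a ha => ?_,
    classifyingMap hs, inr_classifyingMap hs⟩
  obtain ⟨hker, hinr⟩ := gammaMap_of_mem_jIdeal hs ha
  refine ⟨(gammaMap k s a).snd, ⟨hker, hinr.symm⟩, fun x ⟨_, hx⟩ => ?_⟩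
  exact Unitization.inr_injective (R := k) (hx.symm.trans hinr.symm)

/-- Let `α : B → C` be a surjective non-unital `k`-algebra
homomorphism and `s : C → B` a `k`-linear map with `α ∘ s = id`.  Then
`Unitization.map α ∘ γ_s = η_C` as `k`-algebra homomorphisms
`TensorAlgebra k C → Unitization k C`.  Consequently, for every
`a ∈ J(C) = ker η_C` there is a unique element `ξ_s a ∈ ker α` with
`γ_s a = inr (ξ_s a)`, and the resulting map `ξ_s : J(C) → ker α` is a
non-unital `k`-algebra homomorphism — the classifying map of the `k`-split
extension `ker α → B → C`, making the diagram comparing it with the universal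
extension `J(C) → T(C) → C` commute. -/
theorem classifying_map_of_split_extension
    (k : Type*) [CommRing k] {B C : Type*}
    [NonUnitalRing B] [Module k B] [SMulCommClass k B B] [IsScalarTower k B B]
    [NonUnitalRing C] [Module k C] [SMulCommClass k C C] [IsScalarTower k C C]
    (α : B →ₙₐ[k] C) (hα : Function.Surjective α)
    (s : C →ₗ[k] B) (hs : ∀ c : C, α (s c) = c) :
    (unitizationMap k α).comp (gammaMap k s) = etaHom k C ∧
    (∀ a : TensorAlgebra k C, etaHom k C a = 0 →
      ∃! x : B, α x = 0 ∧ gammaMap k s a = Unitization.inr x) ∧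
    ∃ ξ : jIdeal k C →ₙₐ[k] nuaKer k α,
      ∀ a : jIdeal k C,
        (Unitization.inr ((ξ a : B)) : Unitization k B)
          = gammaMap k s (a : TensorAlgebra k C) :=
  classifying_map_of_split_extension_general k α s hs
end
end

section
/- Let f, g : A' → A be non-unital k-algebra homomorphisms that are elementary homotopic via a homomorphism h : A' → A[x]. Let T(f), T(g) : TensorAlgebra k A' → TensorAlgebra k A and T(h) : TensorAlgebra k A' → TensorAlgebra k (A[x]) be the induced algebra homomorphisms (determined by ι a ↦ ι(f a), ι(g a), ι(h a) respectively), and let Θ : TensorAlgebra k (A[x]) → Polynomial (TensorAlgebra k A) be the unique k-algebra homomorphism whose composite with ι sends a polynomial Σ aᵢ xⁱ to Σ C(ι aᵢ)·Xⁱ. Set H := Θ ∘ T(h). Then evaluation at X = 0 composed with H equals T(f), evaluation at X = 1 composed with H equals T(g), and for every a ∈ J(A') = ker η_{A'} all coefficients of H(a) lie in J(A) = ker η_A. Hence the induced maps J(f), J(g) : J(A') → J(A) (restrictions of T(f), T(g)) are elementary homotopic: the functor J preserves polynomial homotopy. -/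
noncomputable section

/-!
Write `H = Θ ∘ T(h)` and `h a = Σ hᵢ(a) xⁱ`. On a generator, `H (ι a) = Σ C (ι hᵢ(a)) Xⁱ`, whose
constant term is `ι (f a)` and whose value at `X = 1` is `ι (g a)`; evaluation at a central
element is an algebra map, so both identities extend from generators to all of `T(A')`.
Applying `η_A` coefficientwise to `H` gives an algebra map `T(A') → Ã[X]` that agrees on
generators with `η_{A'}` followed by `a ↦ Σ inr (hᵢ(a)) Xⁱ`, so it kills `J(A')`. Hence `H`
maps `J(A')` into polynomials with coefficients in `J(A)`, and reading those as non-unital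
polynomials over `J(A)` gives the elementary homotopy between `J(f)` and `J(g)`.
-/

open Polynomial

theorem Polynomial.coeff_finsuppSum_C_mul_X_pow {R T : Type*} [Zero R] [Semiring T]
    (v : ℕ →₀ R) (u : R → T) (hu : u 0 = 0) (n : ℕ) :
    (v.sum fun i r => C (u r) * X ^ i).coeff n = u (v n) := by
  classical
  rw [Finsupp.sum, finsetSum_coeff]
  simp only [coeff_C_mul_X_pow]
  rw [Finset.sum_ite_eq]
  split_ifs with h
  · rfl
  · rw [Finsupp.notMem_support_iff.mp h, hu]

theorem Polynomial.eval_one_finsuppSum_C_mul_X_pow {R T : Type*} [Zero R] [Semiring T]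
    (v : ℕ →₀ R) (u : R → T) :
    (v.sum fun i r => C (u r) * X ^ i).eval 1 = v.sum fun _ r => u r := by
  simp [Finsupp.sum, eval_finsetSum]

namespace NUPoly

section ToPolynomial

variable {k R T U : Type*} [CommRing k] [NonUnitalRing R] [Module k R]
  [Ring T] [Algebra k T] [Ring U] [Algebra k U]

def toPolynomial (φ : R →ₗ[k] T) : NUPoly R →ₗ[k] T[X] where
  toFun p := p.toFinsupp.sum fun i r => C (φ r) * X ^ i
  map_add' p q := by
    ext n
    simp [coeff_finsuppSum_C_mul_X_pow]
  map_smul' c p := by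
    ext n
    simp [coeff_finsuppSum_C_mul_X_pow]

@[simp]
theorem coeff_toPolynomial (φ : R →ₗ[k] T) (p : NUPoly R) (n : ℕ) :
    (toPolynomial φ p).coeff n = φ (p.toFinsupp n) :=
  coeff_finsuppSum_C_mul_X_pow _ _ φ.map_zero n

theorem eval_one_toPolynomial (φ : R →ₗ[k] T) (p : NUPoly R) :
    (toPolynomial φ p).eval 1 = φ (coeffSum k R p) := by
  simp [toPolynomial, eval_one_finsuppSum_C_mul_X_pow, map_finsuppSum]

theorem map_toPolynomial (φ : R →ₗ[k] T) (ψ : T →ₐ[k] U) (p : NUPoly R) :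
    (toPolynomial φ p).map ψ = toPolynomial (ψ.toLinearMap ∘ₗ φ) p := by
  ext n
  simp

theorem toPolynomial_injective {φ : R →ₗ[k] T} (hφ : Function.Injective φ) :
    Function.Injective (toPolynomial φ) := fun p q hpq =>
  toFinsupp_injective <| Finsupp.ext fun n => hφ <| by
    rw [← coeff_toPolynomial, hpq, coeff_toPolynomial]

theorem toPolynomial_mul (φ : R →ₙₐ[k] T) (p q : NUPoly R) :
    toPolynomial (φ : R →ₗ[k] T) (p * q)
      = toPolynomial (φ : R →ₗ[k] T) p * toPolynomial (φ : R →ₗ[k] T) q := by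
  ext n
  rw [coeff_mul, coeff_toPolynomial, mul_apply, map_sum]
  refine Finset.sum_congr rfl fun _ _ => ?_
  rw [coeff_toPolynomial, coeff_toPolynomial]
  exact map_mul φ _ _

def toPolynomialHom (φ : R →ₙₐ[k] T) : NUPoly R →ₙₐ[k] T[X] :=
  { toPolynomial (φ : R →ₗ[k] T) with
    map_zero' := map_zero (toPolynomial (φ : R →ₗ[k] T))
    map_mul' := toPolynomial_mul φ }

@[simp]
theorem toPolynomialHom_apply (φ : R →ₙₐ[k] T) (p : NUPoly R) :
    toPolynomialHom φ p = toPolynomial (φ : R →ₗ[k] T) p :=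
  rfl

end ToPolynomial

section CodRestrict

variable {k B T : Type*} [CommRing k] [NonUnitalRing B] [Module k B] [Ring T] [Algebra k T]
  (S : NonUnitalSubalgebra k T)

def ofPolynomial (P : T[X]) (hP : ∀ n, P.coeff n ∈ S) : NUPoly S :=
  ⟨Finsupp.onFinset P.support (fun n => ⟨P.coeff n, hP n⟩)
    fun _ hn => mem_support_iff.mpr fun h => hn (Subtype.ext h)⟩

theorem toPolynomial_ofPolynomial (P : T[X]) (hP : ∀ n, P.coeff n ∈ S) :
    toPolynomial (NonUnitalSubalgebraClass.subtype S : S →ₗ[k] T) (ofPolynomial S P hP) = P := by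
  ext n
  simp [ofPolynomial]

theorem toPolynomial_subtype_injective :
    Function.Injective (toPolynomial (NonUnitalSubalgebraClass.subtype S : S →ₗ[k] T)) :=
  toPolynomial_injective Subtype.val_injective

def codRestrict (φ : B →ₙₐ[k] T[X]) (hφ : ∀ b n, (φ b).coeff n ∈ S) : B →ₙₐ[k] NUPoly S where
  toFun b := ofPolynomial S (φ b) (hφ b)
  map_smul' c a := toPolynomial_subtype_injective S <| by
    simp only [MonoidHom.id_apply, map_smul, toPolynomial_ofPolynomial]
  map_zero' := toPolynomial_subtype_injective S <| by
    simp only [map_zero, toPolynomial_ofPolynomial]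
  map_add' a b := toPolynomial_subtype_injective S <| by
    simp only [map_add, toPolynomial_ofPolynomial]
  map_mul' a b := toPolynomial_subtype_injective S <| by
    simp only [map_mul, toPolynomial_mul, toPolynomial_ofPolynomial]

theorem coeffSum_codRestrict (φ : B →ₙₐ[k] T[X]) (hφ : ∀ b n, (φ b).coeff n ∈ S) (b : B) :
    (coeffSum k S (codRestrict S φ hφ b) : T) = (φ b).eval 1 := by
  rw [← toPolynomial_ofPolynomial S (φ b) (hφ b), eval_one_toPolynomial]
  rfl

theorem elemHomotopic_of_codRestrict (φ : B →ₙₐ[k] T[X]) (hφ : ∀ b n, (φ b).coeff n ∈ S)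
    {f₀ f₁ : B →ₙₐ[k] S} (h₀ : ∀ b, (f₀ b : T) = (φ b).coeff 0)
    (h₁ : ∀ b, (f₁ b : T) = (φ b).eval 1) : ElemHomotopic k f₀ f₁ :=
  ⟨codRestrict S φ hφ, NonUnitalAlgHom.ext fun b => Subtype.ext (h₀ b).symm,
    NonUnitalAlgHom.ext fun b => Subtype.ext <| (coeffSum_codRestrict S φ hφ b).trans (h₁ b).symm⟩

end CodRestrict

end NUPoly

theorem TensorAlgebra.existsUnique_algHom_ι {k M B : Type*} [CommSemiring k] [AddCommMonoid M]
    [Module k M] [Semiring B] [Algebra k B] (f : M →ₗ[k] B) :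
    ∃! F : TensorAlgebra k M →ₐ[k] B, ∀ m, F (TensorAlgebra.ι k m) = f m :=
  ⟨TensorAlgebra.lift k f, TensorAlgebra.lift_ι_apply f, fun _ hF =>
    TensorAlgebra.hom_ext (LinearMap.ext fun m => by simp [hF])⟩

theorem TensorAlgebra.eval_eq_of_eval_ι {k M T : Type*} [CommSemiring k] [AddCommMonoid M]
    [Module k M] [Ring T] [Algebra k T] {c : T} (hc : ∀ t, Commute t c)
    {H : TensorAlgebra k M →ₐ[k] T[X]} {F : TensorAlgebra k M →ₐ[k] T}
    (hHF : ∀ m, (H (TensorAlgebra.ι k m)).eval c = F (TensorAlgebra.ι k m))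
    (x : TensorAlgebra k M) : (H x).eval c = F x := by
  have hcomp : (eval₂AlgHom (AlgHom.id k T) c hc).comp H = F :=
    TensorAlgebra.hom_ext (LinearMap.ext hHF)
  exact DFunLike.congr_fun hcomp x

section JIdeal

variable (k : Type*) [CommRing k] {A' A : Type*}
  [NonUnitalRing A'] [Module k A'] [SMulCommClass k A' A'] [IsScalarTower k A' A']
  [NonUnitalRing A] [Module k A] [SMulCommClass k A A] [IsScalarTower k A A]

@[simp]
theorem etaHom_ι (a : A) : etaHom k A (TensorAlgebra.ι k a) = Unitization.inr a :=
  TensorAlgebra.lift_ι_apply _ a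

theorem mem_jIdeal {x : TensorAlgebra k A} : x ∈ jIdeal k A ↔ etaHom k A x = 0 :=
  Iff.rfl

theorem mapAlgHom_etaHom_comp {h : A' →ₙₐ[k] NUPoly A}
    {H : TensorAlgebra k A' →ₐ[k] (TensorAlgebra k A)[X]}
    (hH : ∀ a, H (TensorAlgebra.ι k a) = NUPoly.toPolynomial (TensorAlgebra.ι k) (h a)) :
    (mapAlgHom (etaHom k A)).comp H
      = (Unitization.lift ((NUPoly.toPolynomialHom
          (Unitization.inrNonUnitalAlgHom k A)).comp h)).comp (etaHom k A') := by
  refine TensorAlgebra.hom_ext (LinearMap.ext fun a => Polynomial.ext fun n => ?_)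
  simp [hH, NUPoly.map_toPolynomial]

theorem coeff_mem_jIdeal {h : A' →ₙₐ[k] NUPoly A}
    {H : TensorAlgebra k A' →ₐ[k] (TensorAlgebra k A)[X]}
    (hH : ∀ a, H (TensorAlgebra.ι k a) = NUPoly.toPolynomial (TensorAlgebra.ι k) (h a))
    {x : TensorAlgebra k A'} (hx : x ∈ jIdeal k A') (n : ℕ) : (H x).coeff n ∈ jIdeal k A := by
  have hmap : (H x).map (etaHom k A : TensorAlgebra k A →+* Unitization k A) = 0 := by
    rw [← coe_mapAlgHom, ← AlgHom.comp_apply, mapAlgHom_etaHom_comp k hH, AlgHom.comp_apply,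
      (mem_jIdeal k).mp hx, map_zero]
  simpa [mem_jIdeal] using congr_arg (coeff · n) hmap

end JIdeal

/-- Let `f, g : A' → A` be non-unital `k`-algebra
homomorphisms that are elementary homotopic via a homomorphism `h : A' → A[x]`.
Let `T(f), T(g) : TensorAlgebra k A' → TensorAlgebra k A` and
`T(h) : TensorAlgebra k A' → TensorAlgebra k (A[x])` be the induced algebra
homomorphisms, and let `Θ : TensorAlgebra k (A[x]) → Polynomial (TensorAlgebra k A)`
be the unique `k`-algebra homomorphism whose composite with `ι` sends
`Σ aᵢ xⁱ` to `Σ C (ι aᵢ) · Xⁱ`.  Set `H := Θ ∘ T(h)`.  Then evaluation at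
`X = 0` composed with `H` equals `T(f)`, evaluation at `X = 1` composed with
`H` equals `T(g)`, and for every `a ∈ J(A') = ker η_{A'}` all coefficients of
`H a` lie in `J(A) = ker η_A`.  Hence the induced maps
`J(f), J(g) : J(A') → J(A)` (restrictions of `T(f), T(g)`) are elementary
homotopic: the functor `J` preserves polynomial homotopy. -/
theorem jFunctor_preserves_homotopy
    (k : Type*) [CommRing k] {A' A : Type*}
    [NonUnitalRing A'] [Module k A'] [SMulCommClass k A' A'] [IsScalarTower k A' A']
    [NonUnitalRing A] [Module k A] [SMulCommClass k A A] [IsScalarTower k A A]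
    (f g : A' →ₙₐ[k] A) (h : A' →ₙₐ[k] NUPoly A)
    (hf : (NUPoly.atZero k A).comp h = f) (hg : (NUPoly.coeffSum k A).comp h = g)
    -- the induced maps on tensor algebras, characterized on generators
    (Tf Tg : TensorAlgebra k A' →ₐ[k] TensorAlgebra k A)
    (hTf : ∀ a : A', Tf (TensorAlgebra.ι k a) = TensorAlgebra.ι k (f a))
    (hTg : ∀ a : A', Tg (TensorAlgebra.ι k a) = TensorAlgebra.ι k (g a))
    (Th : TensorAlgebra k A' →ₐ[k] TensorAlgebra k (NUPoly A))
    (hTh : ∀ a : A', Th (TensorAlgebra.ι k a) = TensorAlgebra.ι k (h a))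
    -- `Θ`, characterized on generators
    (Θ : TensorAlgebra k (NUPoly A) →ₐ[k] Polynomial (TensorAlgebra k A))
    (hΘ : ∀ p : NUPoly A,
      Θ (TensorAlgebra.ι k p)
        = p.toFinsupp.sum fun i r =>
            Polynomial.C (TensorAlgebra.ι k r) * Polynomial.X ^ i) :
    -- `Θ` exists and is unique
    (∃! Θ' : TensorAlgebra k (NUPoly A) →ₐ[k] Polynomial (TensorAlgebra k A),
      ∀ p : NUPoly A,
        Θ' (TensorAlgebra.ι k p)
          = p.toFinsupp.sum fun i r =>
              Polynomial.C (TensorAlgebra.ι k r) * Polynomial.X ^ i) ∧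
    -- evaluation at `X = 0` composed with `H = Θ ∘ T(h)` equals `T(f)`
    (∀ a : TensorAlgebra k A', ((Θ.comp Th) a).coeff 0 = Tf a) ∧
    -- evaluation at `X = 1` composed with `H` equals `T(g)`
    (∀ a : TensorAlgebra k A', ((Θ.comp Th) a).eval 1 = Tg a) ∧
    -- for `a ∈ J(A')`, all coefficients of `H a` lie in `J(A)`
    (∀ a : TensorAlgebra k A', etaHom k A' a = 0 →
      ∀ i : ℕ, etaHom k A (((Θ.comp Th) a).coeff i) = 0) ∧
    -- hence `J(f)` and `J(g)` are elementary homotopic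
    (∀ (Jf Jg : jIdeal k A' →ₙₐ[k] jIdeal k A),
      (∀ a : jIdeal k A', (Jf a : TensorAlgebra k A) = Tf (a : TensorAlgebra k A')) →
      (∀ a : jIdeal k A', (Jg a : TensorAlgebra k A) = Tg (a : TensorAlgebra k A')) →
      ElemHomotopic k Jf Jg) := by
  have hH : ∀ a, (Θ.comp Th) (TensorAlgebra.ι k a)
      = NUPoly.toPolynomial (TensorAlgebra.ι k) (h a) := fun a => by
    rw [AlgHom.comp_apply, hTh, hΘ]
    rfl
  have hcoeff_zero : ∀ x, ((Θ.comp Th) x).coeff 0 = Tf x := fun x => by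
    rw [coeff_zero_eq_eval_zero]
    refine TensorAlgebra.eval_eq_of_eval_ι Commute.zero_right (fun a => ?_) x
    rw [← coeff_zero_eq_eval_zero, hH, NUPoly.coeff_toPolynomial, hTf, ← hf]
    rfl
  have heval_one : ∀ x, ((Θ.comp Th) x).eval 1 = Tg x :=
    TensorAlgebra.eval_eq_of_eval_ι Commute.one_right fun a => by
      rw [hH, NUPoly.eval_one_toPolynomial, hTg, ← hg]
      rfl
  have hcoeff_mem : ∀ x ∈ jIdeal k A', ∀ n, ((Θ.comp Th) x).coeff n ∈ jIdeal k A :=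
    fun _ hx => coeff_mem_jIdeal k hH hx
  refine ⟨TensorAlgebra.existsUnique_algHom_ι (NUPoly.toPolynomial (TensorAlgebra.ι k (M := A))),
    hcoeff_zero, heval_one, hcoeff_mem, fun Jf Jg hJf hJg => ?_⟩
  exact NUPoly.elemHomotopic_of_codRestrict (jIdeal k A)
    ((Θ.comp Th).toNonUnitalAlgHom.comp (NonUnitalSubalgebraClass.subtype (jIdeal k A')))
    (fun a => hcoeff_mem a a.2) (fun a => (hJf a).trans (hcoeff_zero a).symm)
    (fun a => (hJg a).trans (heval_one a).symm)
end
end
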